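/- Let X be a compact topological space with weight(X) < 𝔰, let I be a type with #I < 𝔰, and let x : I → ℕ → X be a family of sequences. Then there exists an infinite set H ⊆ ℕ such that every sequence x i converges along H. -/

import Mathlib

open Filter Topology Cardinal

/-- A sequence `x` converges along an infinite set `H` if some point is a limit of `x`
restricted to `H`. -/
def ConvergesAlong {X : Type*} [TopologicalSpace X] (x : ℕ → X) (H : Set ℕ) : Prop :=
  ∃ p : X, Filter.Tendsto x (Filter.atTop ⊓ Filter.principal H) (nhds p)

/-- A splitting family. -/
def IsSplittingFamily (𝒮 : Set (Set ℕ)) : Prop :=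
  ∀ A : Set ℕ, A.Infinite → ∃ S ∈ 𝒮, (A ∩ S).Infinite ∧ (A \ S).Infinite

/-- The splitting number 𝔰. -/
noncomputable def splittingNumber : Cardinal :=
  sInf { c | ∃ 𝒮 : Set (Set ℕ), IsSplittingFamily 𝒮 ∧ #𝒮 = c }

/-- A set of infinite subsets of ℕ that is open (downwards closed) and dense. -/
def IsOpenDense (𝒟 : Set (Set ℕ)) : Prop :=
  (∀ H ∈ 𝒟, H.Infinite) ∧
  (∀ H ∈ 𝒟, ∀ H' : Set ℕ, H' ⊆ H → H'.Infinite → H' ∈ 𝒟) ∧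
  (∀ H : Set ℕ, H.Infinite → ∃ H' ∈ 𝒟, H' ⊆ H)

/-- The distributivity number 𝔥. -/
noncomputable def distributivityNumber : Cardinal :=
  sInf { c | ∃ (ι : Type) (D : ι → Set (Set ℕ)),
    (∀ i, IsOpenDense (D i)) ∧ (⋂ i, D i) = ∅ ∧ #ι = c }

/-- The set of limit points of `Y`: points that are limits of sequences with values in `Y`. -/
def seqLimitPoints {X : Type*} [TopologicalSpace X] (Y : Set X) : Set X :=
  {p | ∃ u : ℕ → X, (∀ n, u n ∈ Y) ∧ Filter.Tendsto u Filter.atTop (nhds p)}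

/-- The least sequentially closed superset of `U`. -/
def seqCl {X : Type*} [TopologicalSpace X] (U : Set X) : Set X :=
  ⋂₀ {C | U ⊆ C ∧ IsSeqClosed C}

/-- A sequentially separating limit cover for `Y`. -/
def IsSepLimitCover {X : Type*} [TopologicalSpace X] (Y : Set X) (𝒞 : Set (Set X)) : Prop :=
  (∀ U ∈ 𝒞, U ⊆ seqLimitPoints Y ∧ ∃ V : Set X, IsOpen V ∧ U = V ∩ seqLimitPoints Y) ∧
  (∀ p ∈ seqLimitPoints Y, ∀ q : X, q ≠ p → ∃ U ∈ 𝒞, p ∈ U ∧ q ∉ seqCl U)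

/-- The weight of a topological space: least cardinality of a topological basis. -/
noncomputable def TopologicalSpace.weight (X : Type*) [t : TopologicalSpace X] : Cardinal :=
  sInf { c | ∃ B : Set (Set X), TopologicalSpace.IsTopologicalBasis B ∧ #B = c }
lemma univ_splitting : IsSplittingFamily (Set.univ : Set (Set ℕ)) := by
  intro A hA
  let e := hA.natEmbedding
  refine ⟨Set.range (fun n => (e (2 * n) : ℕ)), Set.mem_univ _, ?_, ?_⟩
  · refine Set.infinite_of_injective_forall_mem (f := fun n => (e (2 * n) : ℕ)) ?_ ?_
    · intro a b h
      have := e.injective (Subtype.ext h)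
      omega
    · intro n
      exact ⟨(e (2 * n)).2, ⟨n, rfl⟩⟩
  · refine Set.infinite_of_injective_forall_mem (f := fun n => (e (2 * n + 1) : ℕ)) ?_ ?_
    · intro a b h
      have := e.injective (Subtype.ext h)
      omega
    · intro n
      refine ⟨(e (2 * n + 1)).2, ?_⟩
      rintro ⟨m, hm⟩
      have := e.injective (Subtype.ext hm)
      omega

lemma diag (f : ℕ → Set ℕ) :
    ∃ A : Set ℕ, A.Infinite ∧ ∀ n, (A ∩ f n).Finite ∨ (A \ f n).Finite := by
  classical
  let C : ℕ → Set ℕ := fun n =>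
    Nat.rec Set.univ (fun n Cn => if (Cn ∩ f n).Infinite then Cn ∩ f n else Cn \ f n) n
  have hCsucc : ∀ n, C (n + 1) =
      if (C n ∩ f n).Infinite then C n ∩ f n else C n \ f n := fun n => rfl
  have hinf : ∀ n, (C n).Infinite := by
    intro n
    induction n with
    | zero => exact Set.infinite_univ
    | succ n ih =>
      rw [hCsucc]
      by_cases h : (C n ∩ f n).Infinite
      · rwa [if_pos h]
      · rw [if_neg h]
        have heq : (C n ∩ f n) ∪ (C n \ f n) = C n := Set.inter_union_diff _ _
        rcases Set.infinite_union.mp (heq ▸ ih) with h' | h'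
        · exact absurd h' h
        · exact h'
  have hmono : ∀ n, C (n + 1) ⊆ C n := by
    intro n
    rw [hCsucc]
    split
    · exact Set.inter_subset_left
    · exact Set.diff_subset
  have hanti : ∀ m n, m ≤ n → C n ⊆ C m := by
    intro m n h
    induction h with
    | refl => exact subset_rfl
    | step _ ih => exact (hmono _).trans ih
  have hex : ∀ n k, ∃ m ∈ C n, k < m := fun n k => (hinf n).exists_gt k
  let a : ℕ → ℕ := fun n =>
    Nat.rec (hex 0 0).choose (fun n an => (hex (n + 1) an).choose) n
  have ha : ∀ n, a n ∈ C n := by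
    intro n
    cases n with
    | zero => exact (hex 0 0).choose_spec.1
    | succ n => exact (hex (n + 1) (a n)).choose_spec.1
  have hlt : ∀ n, a n < a (n + 1) := fun n => (hex (n + 1) (a n)).choose_spec.2
  have hsm : StrictMono a := strictMono_nat_of_lt_succ hlt
  refine ⟨Set.range a, Set.infinite_range_of_injective hsm.injective, fun n => ?_⟩
  by_cases h : (C n ∩ f n).Infinite
  · right
    have hsub : C (n + 1) ⊆ f n := by
      rw [hCsucc, if_pos h]; exact Set.inter_subset_right
    refine ((Set.finite_Iic n).image a).subset ?_
    rintro _ ⟨⟨m, rfl⟩, hnm⟩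
    refine ⟨m, ?_, rfl⟩
    by_contra hc
    exact hnm (hsub (hanti (n + 1) m (by simpa using hc) (ha m)))
  · left
    have hsub : C (n + 1) ⊆ (f n)ᶜ := by
      rw [hCsucc, if_neg h]; exact fun y hy => hy.2
    refine ((Set.finite_Iic n).image a).subset ?_
    rintro _ ⟨⟨m, rfl⟩, hnm⟩
    refine ⟨m, ?_, rfl⟩
    by_contra hc
    exact hsub (hanti (n + 1) m (by simpa using hc) (ha m)) hnm

lemma aleph0_lt_splittingNumber : ℵ₀ < splittingNumber := by
  have hne : { c | ∃ 𝒮 : Set (Set ℕ), IsSplittingFamily 𝒮 ∧ #𝒮 = c }.Nonempty :=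
    ⟨_, Set.univ, univ_splitting, rfl⟩
  obtain ⟨𝒮, h𝒮, hc⟩ := csInf_mem hne
  unfold splittingNumber
  rw [lt_iff_not_ge, ← hc]
  intro hle
  have hcount : 𝒮.Countable := by
    rw [← Set.countable_coe_iff]
    exact Cardinal.mk_le_aleph0_iff.mp hle
  obtain ⟨S0, hS0, -⟩ := h𝒮 Set.univ Set.infinite_univ
  obtain ⟨g, hg⟩ := hcount.exists_eq_range ⟨S0, hS0⟩
  obtain ⟨A, hA, hun⟩ := diag g
  obtain ⟨S, hS, h1, h2⟩ := h𝒮 A hA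
  rw [hg] at hS
  obtain ⟨n, rfl⟩ := hS
  rcases hun n with h | h
  · exact h1 h
  · exact h2 h

lemma exists_unsplit {𝒮 : Set (Set ℕ)} (h : #𝒮 < splittingNumber) :
    ∃ A : Set ℕ, A.Infinite ∧ ∀ S ∈ 𝒮, (A ∩ S).Finite ∨ (A \ S).Finite := by
  have hns : ¬ IsSplittingFamily 𝒮 := by
    intro hs
    have hmem : #𝒮 ∈ { c | ∃ 𝒯 : Set (Set ℕ), IsSplittingFamily 𝒯 ∧ #𝒯 = c } := ⟨𝒮, hs, rfl⟩
    exact absurd (csInf_le' hmem) (not_le.mpr h)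
  unfold IsSplittingFamily at hns
  push_neg at hns
  obtain ⟨A, hA, h2⟩ := hns
  refine ⟨A, hA, fun S hS => ?_⟩
  by_cases hi : (A ∩ S).Infinite
  · right
    rw [← Set.not_infinite]
    exact Set.not_infinite.mpr (h2 S hS hi)
  · left
    rwa [← Set.not_infinite]

theorem simultaneous_of_compact_weight_lt_splittingNumber (X : Type) [TopologicalSpace X]
    [CompactSpace X] (hw : TopologicalSpace.weight X < splittingNumber)
    (I : Type) (hI : #I < splittingNumber) (x : I → ℕ → X) :
    ∃ H : Set ℕ, H.Infinite ∧ ∀ i : I, ConvergesAlong (x i) H := by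
  classical
  -- obtain a basis of minimal cardinality
  have hWne : {c | ∃ B : Set (Set X), TopologicalSpace.IsTopologicalBasis B ∧ #B = c}.Nonempty :=
    ⟨_, {s | IsOpen s}, TopologicalSpace.isTopologicalBasis_opens, rfl⟩
  obtain ⟨ℬ, hℬ, hcard⟩ := csInf_mem hWne
  have hℬlt : #ℬ < splittingNumber := by
    rw [hcard]; exact hw
  -- the family of preimages
  set 𝒮 : Set (Set ℕ) := Set.range (fun p : I × ℬ => (x p.1) ⁻¹' (p.2 : Set X)) with h𝒮def
  have h𝒮 : #𝒮 < splittingNumber := by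
    refine lt_of_le_of_lt Cardinal.mk_range_le ?_
    rw [Cardinal.mk_prod, Cardinal.lift_id, Cardinal.lift_id]
    exact Cardinal.mul_lt_of_lt aleph0_lt_splittingNumber.le hI hℬlt
  obtain ⟨A, hA, hun⟩ := exists_unsplit h𝒮
  refine ⟨A, hA, fun i => ?_⟩
  have hne : (atTop ⊓ 𝓟 A).NeBot := by
    rw [inf_principal_neBot_iff]
    intro U hU
    obtain ⟨N, hN⟩ := mem_atTop_sets.mp hU
    obtain ⟨m, hm, hlt⟩ := hA.exists_gt N
    exact ⟨m, hN m hlt.le, hm⟩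
  obtain ⟨p, -, hp⟩ := CompactSpace.isCompact_univ
    (f := map (x i) (atTop ⊓ 𝓟 A)) (le_principal_iff.mpr (by simp))
  refine ⟨p, ?_⟩
  rw [Filter.tendsto_def]
  intro U hU
  obtain ⟨B, hBℬ, hpB, hBU⟩ := hℬ.mem_nhds_iff.mp hU
  have hfreq : ∃ᶠ n in atTop ⊓ 𝓟 A, x i n ∈ B := by
    have h1 : MapClusterPt p (atTop ⊓ 𝓟 A) (x i) := hp
    exact mapClusterPt_iff_frequently.mp h1 B ((hℬ.isOpen hBℬ).mem_nhds hpB)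
  have hinfB : (A ∩ (x i) ⁻¹' B).Infinite := by
    by_contra hc
    rw [Set.not_infinite] at hc
    have hev2 : ∀ᶠ n in atTop ⊓ 𝓟 A, ¬ x i n ∈ B := by
      rw [eventually_inf_principal, ← Nat.cofinite_eq_atTop]
      filter_upwards [Set.Finite.eventually_cofinite_notMem hc] with n hn hnA hB
      exact hn ⟨hnA, hB⟩
    obtain ⟨n, hn1, hn2⟩ := (hfreq.and_eventually hev2).exists
    exact hn2 hn1
  have hfin : (A \ (x i) ⁻¹' B).Finite := by
    rcases hun ((x i) ⁻¹' B) ⟨(i, ⟨B, hBℬ⟩), rfl⟩ with h | h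
    · exact absurd h hinfB
    · exact h
  have hev : ∀ᶠ n in atTop ⊓ 𝓟 A, x i n ∈ B := by
    rw [eventually_inf_principal, ← Nat.cofinite_eq_atTop]
    filter_upwards [Set.Finite.eventually_cofinite_notMem hfin] with n hn hnA
    by_contra hc
    exact hn ⟨hnA, hc⟩
  exact Filter.mem_of_superset hev (fun n hn => hBU hn)
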